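/- For every z in the open unit ball 𝔹 of ℂⁿ with z ≠ 0, the map Φ_z is an involution: Φ_z(Φ_z(w)) = w for all w ∈ 𝔹; moreover Φ_z(0) = z and Φ_z(z) = 0. -/

import Mathlib

open MeasureTheory
open scoped ENNReal

noncomputable section

/-- `ℂⁿ` with the Euclidean (Hermitian) norm. -/
abbrev Cn (n : ℕ) := EuclideanSpace ℂ (Fin n)

/-- Lebesgue volume measure on `ℂⁿ`. -/
instance (n : ℕ) : MeasureSpace (Cn n) := by
  exact ⟨Measure.map (WithLp.toLp 2) (volume : Measure (Fin n → ℂ))⟩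

/-- The open unit ball `𝔹` of `ℂⁿ`. -/
def ball1 (n : ℕ) : Set (Cn n) := Metric.ball 0 1

/-- `⟨z,w⟩`: the Hermitian inner product in the paper's convention
(linear in `z`, conjugate-linear in `w`); in Mathlib's convention this is `inner w z`. -/
def ip {n : ℕ} (z w : Cn n) : ℂ := inner ℂ w z

/-- The numerator `a - P_a z - s_a Q_a z` of the Möbius automorphism `Φ_a`, where
`P_a z = (⟨z,a⟩/|a|²)a`, `Q_a = I - P_a` and `s_a = √(1-|a|²)`. -/
def numer {n : ℕ} (a z : Cn n) : Cn n :=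
  a - ((ip z a) / ((‖a‖ ^ 2 : ℝ) : ℂ)) • a
    - ((Real.sqrt (1 - ‖a‖ ^ 2) : ℝ) : ℂ) • (z - ((ip z a) / ((‖a‖ ^ 2 : ℝ) : ℂ)) • a)

/-- The involutive Möbius automorphism `Φ_a(z) = (a - P_a z - s_a Q_a z)/(1 - ⟨z,a⟩)`. -/
def phi {n : ℕ} (a z : Cn n) : Cn n := (1 - ip z a)⁻¹ • numer a z

/-!
Write `α = ⟨w,a⟩`. Then `Φ_a(w)` is the combination `(1 - α)⁻¹ ((1 - (1 - s_a) α / |a|²) a - s_a w)`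
of `a` and `w`, and `⟨Φ_a(w),a⟩ = (|a|² - α)/(1 - α)`, i.e. `1 - ⟨Φ_a(w),a⟩ = (1 - |a|²)/(1 - α)`.
Substituting into `Φ_a(Φ_a(w))`, the coefficient of `w` becomes `s_a² / (1 - |a|²) = 1` and that of
`a` becomes `α (1 - |a|² - s_a²) / ((1 - α)|a|²) = 0`. For `a = 0` the junk value `x / 0 = 0` in the
definition makes `Φ_0 = -id`, again an involution.
-/

section MobiusInvolution

variable {n : ℕ}

lemma ip_self (a : Cn n) : ip a a = ((‖a‖ ^ 2 : ℝ) : ℂ) := by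
  rw [ip, inner_self_eq_norm_sq_to_K]; push_cast; rfl

lemma numer_eq (a w : Cn n) :
    numer a w = (1 - (1 - ((Real.sqrt (1 - ‖a‖ ^ 2) : ℝ) : ℂ)) * ip w a / ((‖a‖ ^ 2 : ℝ) : ℂ)) • a
      - ((Real.sqrt (1 - ‖a‖ ^ 2) : ℝ) : ℂ) • w := by
  rw [numer]; match_scalars <;> ring

lemma ip_numer {a : Cn n} (ha : a ≠ 0) (w : Cn n) :
    ip (numer a w) a = ((‖a‖ ^ 2 : ℝ) : ℂ) - ip w a := by
  have ht : ((‖a‖ ^ 2 : ℝ) : ℂ) ≠ 0 := by simpa using ha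
  rw [numer_eq, ip, inner_sub_right, inner_smul_right, inner_smul_right, ← ip, ← ip, ip_self]
  field_simp
  ring

lemma ip_phi {a : Cn n} (ha : a ≠ 0) (w : Cn n) :
    ip (phi a w) a = (1 - ip w a)⁻¹ * (((‖a‖ ^ 2 : ℝ) : ℂ) - ip w a) := by
  rw [phi, ip, inner_smul_right, ← ip, ip_numer ha]

lemma one_sub_ip_phi {a w : Cn n} (ha : a ≠ 0) (hw : ip w a ≠ 1) :
    1 - ip (phi a w) a = (1 - ((‖a‖ ^ 2 : ℝ) : ℂ)) / (1 - ip w a) := by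
  have h1w : 1 - ip w a ≠ 0 := sub_ne_zero.mpr hw.symm
  rw [ip_phi ha]
  field_simp
  ring

lemma phi_zero_right (a : Cn n) : phi a 0 = a := by
  simp [phi, numer, ip]

lemma phi_self (a : Cn n) : phi a a = 0 := by
  rcases eq_or_ne a 0 with rfl | ha
  · simp [phi, numer, ip]
  have ht : ((‖a‖ ^ 2 : ℝ) : ℂ) ≠ 0 := by simpa using ha
  rw [phi, numer, ip_self, div_self ht]
  simp

lemma ip_ne_one {a w : Cn n} (ha : ‖a‖ ≤ 1) (hw : ‖w‖ < 1) : ip w a ≠ 1 := by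
  intro h
  have := norm_inner_le_norm (𝕜 := ℂ) a w
  rw [← ip, h, norm_one] at this
  nlinarith [norm_nonneg w]

lemma phi_phi {a w : Cn n} (ha : ‖a‖ < 1) (hw : ip w a ≠ 1) : phi a (phi a w) = w := by
  rcases eq_or_ne a 0 with rfl | ha0
  · simp [phi, numer, ip]
  have hs : ((√(1 - ‖a‖ ^ 2) : ℝ) : ℂ) ^ 2 = 1 - (‖a‖ : ℂ) ^ 2 := by
    rw [← Complex.ofReal_pow, Real.sq_sqrt (by nlinarith [norm_nonneg a])]
    push_cast; ring
  have hna : (‖a‖ : ℂ) ≠ 0 := by simpa using ha0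
  have h1t : 1 - (‖a‖ : ℂ) ^ 2 ≠ 0 := by
    rw [sub_ne_zero]; norm_cast; nlinarith [norm_nonneg a]
  have h1w : 1 - ip w a ≠ 0 := sub_ne_zero.mpr hw.symm
  rw [phi, one_sub_ip_phi ha0 hw, numer_eq, ip_phi ha0, phi, numer_eq]
  match_scalars
  · field_simp
    linear_combination (-ip w a) * hs
  · field_simp
    linear_combination hs

end MobiusInvolution

theorem stmt17_general (n : ℕ) (z : Cn n) (hz : z ∈ ball1 n) :
    (∀ w ∈ ball1 n, phi z (phi z w) = w) ∧ phi z 0 = z ∧ phi z z = 0 := by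
  have hz1 : ‖z‖ < 1 := mem_ball_zero_iff.mp hz
  exact ⟨fun w hw => phi_phi hz1 (ip_ne_one hz1.le (mem_ball_zero_iff.mp hw)),
    phi_zero_right z, phi_self z⟩

theorem stmt17 (n : ℕ) (z : Cn n) (hz : z ∈ ball1 n) (hz0 : z ≠ 0) :
    (∀ w ∈ ball1 n, phi z (phi z w) = w) ∧ phi z 0 = z ∧ phi z z = 0 :=
  stmt17_general n z hz
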